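/- For the two-layer minimalist model and any parameter θ = (u, v₁) with σ₁²v₁² + σ₁²o₁² > 0, the sharpness satisfies (1/N)·[σ₁²v₁² + σ₁²o₁² + 2σ₁⁴o₁²v₁²/(σ₁²v₁² + σ₁²o₁²) − 2σ₁³d₁o₁v₁/(σ₁²v₁² + σ₁²o₁²)] ≤ S(θ) ≤ (1/N)·[σ₁²v₁² + Σ_{i=1}^r σ_i²o_i² + √(Σ_{i=1}^r (σ_i(σ_i o_i v₁ − d_i))²)]. -/

import Mathlib

open scoped BigOperators

/-- Sharpness `S(θ) = λ_max(∇²L(θ))`: the largest eigenvalue of the Hessian of `L` at `θ`,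
expressed as the supremum of the Hessian quadratic form over the unit sphere. -/
noncomputable def sharpness {E : Type*} [NormedAddCommGroup E] [NormedSpace ℝ E]
    (L : E → ℝ) (θ : E) : ℝ :=
  sSup {c : ℝ | ∃ ξ : E, ‖ξ‖ = 1 ∧ fderiv ℝ (fderiv ℝ L) θ ξ ξ = c}

/-!
In the singular bases, the Hessian quadratic form at `θ = (u, v₁)` in the direction `ξ = (u', s)` is
`N⁻¹ (∑ σᵢ² (oᵢ s + v₁ tᵢ)² + 2 s ∑ σᵢ (σᵢ oᵢ v₁ - dᵢ) tᵢ)` with `tᵢ = wᵢᵀ u'`, and Bessel's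
inequality gives `∑ tᵢ² + s² ≤ ‖ξ‖²`. On the unit sphere, Cauchy–Schwarz followed by AM-GM bounds
the first sum by `σ₁² v₁² + ∑ σᵢ² oᵢ²` (using `σᵢ ≤ σ₁`) and the second by the norm of the vector
`σᵢ (σᵢ oᵢ v₁ - dᵢ)`. For the lower bound, evaluate the form at the unit vector
`(v₁ w₁, o₁) / √(v₁² + o₁²)` and keep only the `i = 1` term of the first sum.
-/

section Sharpness

variable {E : Type*} [NormedAddCommGroup E] [NormedSpace ℝ E] {L : E → ℝ} {θ : E} {M : ℝ}

theorem sharpness_le (hE : ∃ ξ : E, ‖ξ‖ = 1)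
    (h : ∀ ξ : E, ‖ξ‖ = 1 → fderiv ℝ (fderiv ℝ L) θ ξ ξ ≤ M) : sharpness L θ ≤ M :=
  csSup_le (hE.elim fun ξ hξ => ⟨_, ξ, hξ, rfl⟩) (by rintro _ ⟨ξ, hξ, rfl⟩; exact h ξ hξ)

theorem le_sharpness (h : ∀ ξ : E, ‖ξ‖ = 1 → fderiv ℝ (fderiv ℝ L) θ ξ ξ ≤ M) {ξ : E}
    (hξ : ‖ξ‖ = 1) : fderiv ℝ (fderiv ℝ L) θ ξ ξ ≤ sharpness L θ :=
  le_csSup ⟨M, by rintro _ ⟨ξ, hξ, rfl⟩; exact h ξ hξ⟩ ⟨ξ, hξ, rfl⟩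

end Sharpness

section LeastSquares

variable {E : Type*} [NormedAddCommGroup E] [NormedSpace ℝ E]

open ContinuousLinearMap

theorem hasFDerivAt_mul_sub_sq (a b : E →L[ℝ] ℝ) (k : ℝ) (φ : E) :
    HasFDerivAt (fun φ => (a φ * b φ - k) ^ 2)
      ((2 * (a φ * b φ - k)) • (a.smulRight b + b.smulRight a) φ) φ := by
  refine ((((a.hasFDerivAt (x := φ)).mul b.hasFDerivAt).sub_const k).pow 2).congr_fderiv ?_
  ext ξ
  simp only [smul_apply, add_apply, smulRight_apply, smul_eq_mul, Pi.mul_apply]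
  ring

theorem fderiv_fderiv_sum_mul_sub_sq_apply {ι : Type*} [Fintype ι] (A : ι → E →L[ℝ] ℝ)
    (b : E →L[ℝ] ℝ) (y : ι → ℝ) (c : ℝ) (θ ξ : E) :
    fderiv ℝ (fderiv ℝ fun φ => c * ∑ n, (A n φ * b φ - y n) ^ 2) θ ξ ξ
      = c * ∑ n, (2 * (A n θ * b ξ + b θ * A n ξ) ^ 2
          + 4 * (A n θ * b θ - y n) * (A n ξ * b ξ)) := by
  set Φ : ι → E →L[ℝ] E →L[ℝ] ℝ := fun n => (A n).smulRight b + b.smulRight (A n)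
  have hgrad : fderiv ℝ (fun φ => c * ∑ n, (A n φ * b φ - y n) ^ 2)
      = fun φ => c • ∑ n, (2 * (A n φ * b φ - y n)) • Φ n φ :=
    funext fun φ =>
      ((HasFDerivAt.fun_sum fun n _ => hasFDerivAt_mul_sub_sq (A n) b (y n) φ).const_mul c).fderiv
  have hhess : HasFDerivAt (fun φ => c • ∑ n, (2 * (A n φ * b φ - y n)) • Φ n φ)
      (c • ∑ n, ((2 * (A n θ * b θ - y n)) • Φ n
        + ((2 : ℝ) • (A n θ • b + b θ • A n)).smulRight (Φ n θ))) θ :=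
    (HasFDerivAt.fun_sum fun n _ =>
      ((((A n).hasFDerivAt (x := θ)).mul b.hasFDerivAt).sub_const (y n)).const_mul 2 |>.smul
        (Φ n).hasFDerivAt).fun_const_smul c
  rw [hgrad, hhess.fderiv]
  simp only [Φ, FunLike.coe_sum, Finset.sum_apply, add_apply, smul_apply,
    smulRight_apply, smul_eq_mul, Finset.mul_sum]
  refine Finset.sum_congr rfl fun n _ => ?_
  ring

end LeastSquares

section UnitBall

variable {κ : Type*} [Fintype κ] {t : κ → ℝ} {s : ℝ}

theorem sum_sq_mul_add_le (hts : ∑ i, t i ^ 2 + s ^ 2 ≤ 1) (σ a : κ → ℝ) (v σ₀ : ℝ)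
    (hσ : ∀ i, σ i ^ 2 ≤ σ₀ ^ 2) :
    ∑ i, (σ i * (a i * s + v * t i)) ^ 2 ≤ σ₀ ^ 2 * v ^ 2 + ∑ i, σ i ^ 2 * a i ^ 2 := by
  set B := ∑ i, σ i ^ 2 * a i ^ 2
  set C := ∑ i, (σ i * a i) * (σ i * t i)
  set D := ∑ i, (σ i * t i) ^ 2
  have hexpand : ∑ i, (σ i * (a i * s + v * t i)) ^ 2
      = s ^ 2 * B + 2 * (s * v * C) + v ^ 2 * D := by
    simp only [B, C, D, Finset.mul_sum, ← Finset.sum_add_distrib]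
    exact Finset.sum_congr rfl fun i _ => by ring
  have hs : 0 ≤ 1 - s ^ 2 := by
    linarith [Finset.sum_nonneg fun i (_ : i ∈ Finset.univ) => sq_nonneg (t i)]
  have hD : D ≤ σ₀ ^ 2 * (1 - s ^ 2) := calc
    D ≤ ∑ i, σ₀ ^ 2 * t i ^ 2 := Finset.sum_le_sum fun i _ => by
        rw [mul_pow]; exact mul_le_mul_of_nonneg_right (hσ i) (sq_nonneg _)
    _ ≤ σ₀ ^ 2 * (1 - s ^ 2) := by
        rw [← Finset.mul_sum]; exact mul_le_mul_of_nonneg_left (by linarith) (sq_nonneg _)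
  have hCS : C ^ 2 ≤ B * D := by
    simpa only [B, mul_pow] using
      Finset.sum_mul_sq_le_sq_mul_sq Finset.univ (fun i => σ i * a i) _
  -- AM-GM between `B (1 - s²)` and `σ₀² v² s²` absorbs the cross term
  have hcross : 2 * (s * v * C) ≤ B * (1 - s ^ 2) + σ₀ ^ 2 * v ^ 2 * s ^ 2 := by
    refine two_mul_le_add_of_sq_le_mul (by positivity) (by positivity) ?_
    calc (s * v * C) ^ 2 = s ^ 2 * v ^ 2 * C ^ 2 := by ring
      _ ≤ s ^ 2 * v ^ 2 * (B * (σ₀ ^ 2 * (1 - s ^ 2))) := by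
          gcongr; exact hCS.trans (by gcongr)
      _ = B * (1 - s ^ 2) * (σ₀ ^ 2 * v ^ 2 * s ^ 2) := by ring
  rw [hexpand]
  linarith [mul_le_mul_of_nonneg_left hD (sq_nonneg v)]

theorem two_mul_mul_sum_mul_le (hts : ∑ i, t i ^ 2 + s ^ 2 ≤ 1) (g : κ → ℝ) :
    2 * s * ∑ i, g i * t i ≤ √(∑ i, g i ^ 2) := by
  set G := √(∑ i, g i ^ 2)
  set T := ∑ i, t i ^ 2
  have hCS : (∑ i, g i * t i) ^ 2 ≤ G ^ 2 * T := by
    rw [Real.sq_sqrt (by positivity)]; exact Finset.sum_mul_sq_le_sq_mul_sq _ _ _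
  have hAMGM : 2 * (s * ∑ i, g i * t i) ≤ G * T + G * s ^ 2 := by
    refine two_mul_le_add_of_sq_le_mul (by positivity) (by positivity) ?_
    calc (s * ∑ i, g i * t i) ^ 2 = s ^ 2 * (∑ i, g i * t i) ^ 2 := by ring
      _ ≤ s ^ 2 * (G ^ 2 * T) := by gcongr
      _ = G * T * (G * s ^ 2) := by ring
  linarith [mul_le_mul_of_nonneg_left hts (Real.sqrt_nonneg (∑ i, g i ^ 2))]

end UnitBall

section Orthonormal

variable {κ ι : Type*} [Fintype ι] [DecidableEq κ] {w : κ → ι → ℝ}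

theorem orthonormal_toLp_of_sum_mul
    (hw : ∀ i j, ∑ m, w i m * w j m = if i = j then (1 : ℝ) else 0) :
    Orthonormal ℝ fun i => WithLp.toLp 2 (w i) :=
  orthonormal_iff_ite.mpr fun i j => by simpa [PiLp.inner_apply, mul_comm] using hw i j

theorem sum_sq_dotProduct_le_of_orthonormal [Fintype κ]
    (hw : ∀ i j, ∑ m, w i m * w j m = if i = j then (1 : ℝ) else 0) (x : ι → ℝ) :
    ∑ i, (∑ m, w i m * x m) ^ 2 ≤ ∑ m, x m ^ 2 := by
  simpa [PiLp.inner_apply, EuclideanSpace.norm_sq_eq, mul_comm] using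
    (orthonormal_toLp_of_sum_mul hw).sum_inner_products_le (WithLp.toLp 2 x) (s := Finset.univ)

theorem sum_mul_sum_of_orthonormal [Fintype κ]
    (hw : ∀ i j, ∑ m, w i m * w j m = if i = j then (1 : ℝ) else 0) (p q : κ → ℝ) :
    ∑ m, (∑ i, p i * w i m) * (∑ j, q j * w j m) = ∑ i, p i * q i := by
  simpa [PiLp.inner_apply, Finset.sum_apply, mul_comm] using
    (orthonormal_toLp_of_sum_mul hw).inner_sum p q Finset.univ

end Orthonormal

section TwoLayer

variable {N dd r : ℕ} {X : Matrix (Fin N) (Fin dd) ℝ} {σ : Fin r → ℝ} {e : Fin r → Fin N → ℝ}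
  {w : Fin r → Fin dd → ℝ} {dc : Fin r → ℝ} {y : Fin N → ℝ}
  {L : EuclideanSpace ℝ (Fin dd ⊕ Unit) → ℝ}

/-- The paper's `oᵢ = wᵢᵀ u` for `θ = (u, v₁)`; the block `u` is indexed by `Sum.inl`. -/
def singularCoord (w : Fin r → Fin dd → ℝ) (θ : EuclideanSpace ℝ (Fin dd ⊕ Unit)) (i : Fin r) :
    ℝ :=
  ∑ m, w i m * θ (Sum.inl m)

theorem sum_mul_apply_eq_sum_singularCoord (hX : ∀ n m, X n m = ∑ i, σ i * e i n * w i m)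
    (θ : EuclideanSpace ℝ (Fin dd ⊕ Unit)) (n : Fin N) :
    ∑ m, X n m * θ (Sum.inl m) = ∑ i, σ i * singularCoord w θ i * e i n := by
  simp only [hX, singularCoord, Finset.sum_mul, Finset.mul_sum]
  rw [Finset.sum_comm]
  exact Finset.sum_congr rfl fun i _ => Finset.sum_congr rfl fun m _ => by ring

theorem sum_sq_singularCoord_add_sq_le
    (hw : ∀ i j : Fin r, ∑ m, w i m * w j m = if i = j then (1 : ℝ) else 0)
    (ξ : EuclideanSpace ℝ (Fin dd ⊕ Unit)) :
    ∑ i, singularCoord w ξ i ^ 2 + ξ (Sum.inr ()) ^ 2 ≤ ‖ξ‖ ^ 2 := by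
  rw [EuclideanSpace.norm_sq_eq, Fintype.sum_sum_type]
  simpa [singularCoord, Real.norm_eq_abs, sq_abs] using
    sum_sq_dotProduct_le_of_orthonormal hw fun m => ξ (Sum.inl m)

theorem fderiv_fderiv_twoLayerLoss_apply
    (he : ∀ i j : Fin r, ∑ n, e i n * e j n = if i = j then (1 : ℝ) else 0)
    (hX : ∀ n m, X n m = ∑ i, σ i * e i n * w i m)
    (hy : ∀ n, y n = ∑ i, dc i * e i n)
    (hL : ∀ θ, L θ = (1 / (2 * (N : ℝ))) *
      ∑ n, ((∑ m, X n m * θ (Sum.inl m)) * θ (Sum.inr ()) - y n) ^ 2)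
    (θ ξ : EuclideanSpace ℝ (Fin dd ⊕ Unit)) :
    fderiv ℝ (fderiv ℝ L) θ ξ ξ = (1 / (N : ℝ)) *
      (∑ i, (σ i * (singularCoord w θ i * ξ (Sum.inr ())
          + θ (Sum.inr ()) * singularCoord w ξ i)) ^ 2
        + 2 * ξ (Sum.inr ()) * ∑ i,
            σ i * (σ i * singularCoord w θ i * θ (Sum.inr ()) - dc i) * singularCoord w ξ i) := by
  set A : Fin N → EuclideanSpace ℝ (Fin dd ⊕ Unit) →L[ℝ] ℝ :=
    fun n => ∑ m, X n m • EuclideanSpace.proj (Sum.inl m)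
  set V : EuclideanSpace ℝ (Fin dd ⊕ Unit) →L[ℝ] ℝ := EuclideanSpace.proj (Sum.inr ())
  have hA : ∀ n φ, A n φ = ∑ i, σ i * singularCoord w φ i * e i n := fun n φ => by
    simp [A, ← sum_mul_apply_eq_sum_singularCoord hX]
  have hV : ∀ φ, V φ = φ (Sum.inr ()) := fun _ => rfl
  have hLAV : L = fun φ => 1 / (2 * (N : ℝ)) * ∑ n, (A n φ * V φ - y n) ^ 2 := by
    funext φ
    simp [hL, A, V]
  rw [hLAV, fderiv_fderiv_sum_mul_sub_sq_apply]
  set o := singularCoord w θ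
  set t := singularCoord w ξ
  set v := θ (Sum.inr ())
  set s := ξ (Sum.inr ())
  have hquad : ∑ n, (A n θ * V ξ + V θ * A n ξ) ^ 2 = ∑ i, (σ i * (o i * s + v * t i)) ^ 2 := by
    have hrow : ∀ n, A n θ * V ξ + V θ * A n ξ = ∑ i, σ i * (o i * s + v * t i) * e i n :=
      fun n => by
        rw [hA, hA, hV, hV, Finset.sum_mul, Finset.mul_sum, ← Finset.sum_add_distrib]
        exact Finset.sum_congr rfl fun i _ => by ring
    simp only [hrow, sq, sum_mul_sum_of_orthonormal he]
  have hcross :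
      ∑ n, (A n θ * V θ - y n) * A n ξ = ∑ i, σ i * (σ i * o i * v - dc i) * t i := by
    have hres : ∀ n, A n θ * V θ - y n = ∑ i, (σ i * o i * v - dc i) * e i n := fun n => by
      rw [hA, hV, hy, Finset.sum_mul, ← Finset.sum_sub_distrib]
      exact Finset.sum_congr rfl fun i _ => by ring
    simp_rw [hres, hA]
    rw [sum_mul_sum_of_orthonormal he]
    exact Finset.sum_congr rfl fun i _ => by ring
  have hsplit : ∑ n, (2 * (A n θ * V ξ + V θ * A n ξ) ^ 2 + 4 * (A n θ * V θ - y n) * (A n ξ * V ξ))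
      = 2 * ∑ n, (A n θ * V ξ + V θ * A n ξ) ^ 2 + 4 * V ξ * ∑ n, (A n θ * V θ - y n) * A n ξ := by
    rw [Finset.sum_add_distrib, ← Finset.mul_sum, Finset.mul_sum (a := 4 * V ξ)]
    congr 1
    exact Finset.sum_congr rfl fun n _ => by ring
  rw [hsplit, hquad, hcross, hV]
  ring

theorem fderiv_fderiv_twoLayerLoss_le
    (he : ∀ i j : Fin r, ∑ n, e i n * e j n = if i = j then (1 : ℝ) else 0)
    (hw : ∀ i j : Fin r, ∑ m, w i m * w j m = if i = j then (1 : ℝ) else 0)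
    (hX : ∀ n m, X n m = ∑ i, σ i * e i n * w i m)
    (hy : ∀ n, y n = ∑ i, dc i * e i n)
    (hL : ∀ θ, L θ = (1 / (2 * (N : ℝ))) *
      ∑ n, ((∑ m, X n m * θ (Sum.inl m)) * θ (Sum.inr ()) - y n) ^ 2)
    {i₀ : Fin r} (hσ : ∀ i, σ i ^ 2 ≤ σ i₀ ^ 2) (θ : EuclideanSpace ℝ (Fin dd ⊕ Unit)) :
    ∀ ξ, ‖ξ‖ = 1 → fderiv ℝ (fderiv ℝ L) θ ξ ξ ≤ (1 / (N : ℝ)) * (σ i₀ ^ 2 * θ (Sum.inr ()) ^ 2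
      + (∑ i, σ i ^ 2 * singularCoord w θ i ^ 2)
      + √(∑ i, (σ i * (σ i * singularCoord w θ i * θ (Sum.inr ()) - dc i)) ^ 2)) := by
  intro ξ hξ
  have hts := sum_sq_singularCoord_add_sq_le hw ξ
  rw [hξ, one_pow] at hts
  rw [fderiv_fderiv_twoLayerLoss_apply he hX hy hL]
  exact mul_le_mul_of_nonneg_left (add_le_add (sum_sq_mul_add_le hts σ _ _ _ hσ)
    (two_mul_mul_sum_mul_le hts _)) (by positivity)

def singularDirection (w : Fin r → Fin dd → ℝ) (i₀ : Fin r) (a b : ℝ) :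
    EuclideanSpace ℝ (Fin dd ⊕ Unit) :=
  WithLp.toLp 2 (Sum.elim (fun m => a * w i₀ m) fun _ => b)

@[simp]
theorem singularDirection_inr (w : Fin r → Fin dd → ℝ) (i₀ : Fin r) (a b : ℝ) :
    singularDirection w i₀ a b (Sum.inr ()) = b :=
  rfl

theorem singularCoord_singularDirection
    (hw : ∀ i j : Fin r, ∑ m, w i m * w j m = if i = j then (1 : ℝ) else 0) (i₀ i : Fin r)
    (a b : ℝ) : singularCoord w (singularDirection w i₀ a b) i = if i = i₀ then a else 0 := by
  simp [singularCoord, singularDirection, mul_left_comm _ a, ← Finset.mul_sum, hw]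

theorem norm_singularDirection
    (hw : ∀ i j : Fin r, ∑ m, w i m * w j m = if i = j then (1 : ℝ) else 0) (i₀ : Fin r)
    {a b : ℝ} (hab : a ^ 2 + b ^ 2 = 1) : ‖singularDirection w i₀ a b‖ = 1 := by
  refine (sq_eq_sq₀ (norm_nonneg _) zero_le_one).1 ?_
  have hw₀ : ∑ m, w i₀ m ^ 2 = 1 := by simpa [sq] using hw i₀ i₀
  simp [EuclideanSpace.norm_sq_eq, Fintype.sum_sum_type, singularDirection, mul_pow,
    ← Finset.mul_sum, hw₀, hab]

theorem le_fderiv_fderiv_twoLayerLoss_singularDirection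
    (he : ∀ i j : Fin r, ∑ n, e i n * e j n = if i = j then (1 : ℝ) else 0)
    (hw : ∀ i j : Fin r, ∑ m, w i m * w j m = if i = j then (1 : ℝ) else 0)
    (hX : ∀ n m, X n m = ∑ i, σ i * e i n * w i m)
    (hy : ∀ n, y n = ∑ i, dc i * e i n)
    (hL : ∀ θ, L θ = (1 / (2 * (N : ℝ))) *
      ∑ n, ((∑ m, X n m * θ (Sum.inl m)) * θ (Sum.inr ()) - y n) ^ 2)
    (θ : EuclideanSpace ℝ (Fin dd ⊕ Unit)) (i₀ : Fin r) (a b : ℝ) :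
    (1 / (N : ℝ)) * ((σ i₀ * (singularCoord w θ i₀ * b + θ (Sum.inr ()) * a)) ^ 2
      + 2 * b * (σ i₀ * (σ i₀ * singularCoord w θ i₀ * θ (Sum.inr ()) - dc i₀) * a))
      ≤ fderiv ℝ (fderiv ℝ L) θ (singularDirection w i₀ a b) (singularDirection w i₀ a b) := by
  set v := θ (Sum.inr ())
  set o := singularCoord w θ
  rw [fderiv_fderiv_twoLayerLoss_apply he hX hy hL]
  simp only [singularCoord_singularDirection hw, singularDirection_inr]
  have hsq : (σ i₀ * (o i₀ * b + v * a)) ^ 2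
      ≤ ∑ i, (σ i * (o i * b + v * if i = i₀ then a else 0)) ^ 2 := by
    simpa using Finset.single_le_sum
      (fun i _ => sq_nonneg (σ i * (o i * b + v * if i = i₀ then a else 0))) (Finset.mem_univ i₀)
  have hcross : ∑ i, σ i * (σ i * o i * v - dc i) * (if i = i₀ then a else 0)
      = σ i₀ * (σ i₀ * o i₀ * v - dc i₀) * a := by
    simp
  rw [hcross]
  exact mul_le_mul_of_nonneg_left (add_le_add_left hsq _) (by positivity)

end TwoLayer

theorem two_layer_sharpness_bounds_arbitrary_theta_general
    (N dd r : ℕ) (hr : 0 < r)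
    (X : Matrix (Fin N) (Fin dd) ℝ)
    (σ : Fin r → ℝ) (e : Fin r → Fin N → ℝ) (w : Fin r → Fin dd → ℝ)
    (dc : Fin r → ℝ) (y : Fin N → ℝ)
    (hσpos : ∀ i, 0 < σ i)
    (hσdec : ∀ i j : Fin r, i ≤ j → σ j ≤ σ i)
    (he : ∀ i j : Fin r, ∑ n, e i n * e j n = if i = j then (1 : ℝ) else 0)
    (hw : ∀ i j : Fin r, ∑ m, w i m * w j m = if i = j then (1 : ℝ) else 0)
    (hX : ∀ n m, X n m = ∑ i, σ i * e i n * w i m)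
    (hy : ∀ n, y n = ∑ i, dc i * e i n)
    (L : EuclideanSpace ℝ (Fin dd ⊕ Unit) → ℝ)
    (hL : ∀ θ, L θ = (1 / (2 * (N : ℝ))) *
      ∑ n, ((∑ m, X n m * θ (Sum.inl m)) * θ (Sum.inr ()) - y n) ^ 2)
    (θ : EuclideanSpace ℝ (Fin dd ⊕ Unit))
    (o : Fin r → ℝ) (ho : ∀ i, o i = ∑ m, w i m * θ (Sum.inl m))
    (hpos : 0 < σ ⟨0, hr⟩ ^ 2 * θ (Sum.inr ()) ^ 2 + σ ⟨0, hr⟩ ^ 2 * o ⟨0, hr⟩ ^ 2) :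
    (1 / (N : ℝ)) * (σ ⟨0, hr⟩ ^ 2 * θ (Sum.inr ()) ^ 2 + σ ⟨0, hr⟩ ^ 2 * o ⟨0, hr⟩ ^ 2
        + 2 * σ ⟨0, hr⟩ ^ 4 * o ⟨0, hr⟩ ^ 2 * θ (Sum.inr ()) ^ 2
            / (σ ⟨0, hr⟩ ^ 2 * θ (Sum.inr ()) ^ 2 + σ ⟨0, hr⟩ ^ 2 * o ⟨0, hr⟩ ^ 2)
        - 2 * σ ⟨0, hr⟩ ^ 3 * dc ⟨0, hr⟩ * o ⟨0, hr⟩ * θ (Sum.inr ())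
            / (σ ⟨0, hr⟩ ^ 2 * θ (Sum.inr ()) ^ 2 + σ ⟨0, hr⟩ ^ 2 * o ⟨0, hr⟩ ^ 2))
      ≤ sharpness L θ ∧
    sharpness L θ ≤ (1 / (N : ℝ)) *
      (σ ⟨0, hr⟩ ^ 2 * θ (Sum.inr ()) ^ 2 + (∑ i, σ i ^ 2 * o i ^ 2)
        + Real.sqrt (∑ i, (σ i * (σ i * o i * θ (Sum.inr ()) - dc i)) ^ 2)) := by
  obtain rfl : o = singularCoord w θ := funext ho
  set i₀ : Fin r := ⟨0, hr⟩
  set v := θ (Sum.inr ())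
  set o₀ := singularCoord w θ i₀
  have hσ : ∀ i, σ i ^ 2 ≤ σ i₀ ^ 2 := fun i =>
    pow_le_pow_left₀ (hσpos i).le (hσdec i₀ i (Nat.zero_le _)) 2
  have hbound := fderiv_fderiv_twoLayerLoss_le he hw hX hy hL hσ θ
  refine ⟨?_, sharpness_le ⟨EuclideanSpace.single (Sum.inr ()) 1, by simp⟩ hbound⟩
  have hS : 0 < v ^ 2 + o₀ ^ 2 := pos_of_mul_pos_right (a := σ i₀ ^ 2) (by linarith) (sq_nonneg _)
  set c := √(v ^ 2 + o₀ ^ 2)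
  have hc : c ^ 2 = v ^ 2 + o₀ ^ 2 := Real.sq_sqrt hS.le
  have hc₀ : c ≠ 0 := (Real.sqrt_pos.2 hS).ne'
  have hunit : (v / c) ^ 2 + (o₀ / c) ^ 2 = 1 := by
    rw [div_pow, div_pow, hc]; field_simp
  calc _ = (1 / (N : ℝ)) * ((σ i₀ * (o₀ * (o₀ / c) + v * (v / c))) ^ 2
        + 2 * (o₀ / c) * (σ i₀ * (σ i₀ * o₀ * v - dc i₀) * (v / c))) := by
        congr 1
        field_simp
        rw [hc]
        field_simp
        ring
    _ ≤ _ := le_fderiv_fderiv_twoLayerLoss_singularDirection he hw hX hy hL θ i₀ (v / c) (o₀ / c)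
    _ ≤ sharpness L θ := le_sharpness hbound (norm_singularDirection hw i₀ hunit)

/-- **Sharpness bounds for the two-layer minimalist model at an arbitrary parameter.** -/
theorem two_layer_sharpness_bounds_arbitrary_theta
    (N dd r : ℕ) (hN : 0 < N) (hr : 0 < r)
    (X : Matrix (Fin N) (Fin dd) ℝ)
    (σ : Fin r → ℝ) (e : Fin r → Fin N → ℝ) (w : Fin r → Fin dd → ℝ)
    (dc : Fin r → ℝ) (y : Fin N → ℝ)
    (hσpos : ∀ i, 0 < σ i)
    (hσdec : ∀ i j : Fin r, i ≤ j → σ j ≤ σ i)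
    (he : ∀ i j : Fin r, ∑ n, e i n * e j n = if i = j then (1 : ℝ) else 0)
    (hw : ∀ i j : Fin r, ∑ m, w i m * w j m = if i = j then (1 : ℝ) else 0)
    (hX : ∀ n m, X n m = ∑ i, σ i * e i n * w i m)
    (hrank : X.rank = r)
    (hy : ∀ n, y n = ∑ i, dc i * e i n)
    (L : EuclideanSpace ℝ (Fin dd ⊕ Unit) → ℝ)
    (hL : ∀ θ, L θ = (1 / (2 * (N : ℝ))) *
      ∑ n, ((∑ m, X n m * θ (Sum.inl m)) * θ (Sum.inr ()) - y n) ^ 2)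
    (θ : EuclideanSpace ℝ (Fin dd ⊕ Unit))
    (o : Fin r → ℝ) (ho : ∀ i, o i = ∑ m, w i m * θ (Sum.inl m))
    (hpos : 0 < σ ⟨0, hr⟩ ^ 2 * θ (Sum.inr ()) ^ 2 + σ ⟨0, hr⟩ ^ 2 * o ⟨0, hr⟩ ^ 2) :
    (1 / (N : ℝ)) * (σ ⟨0, hr⟩ ^ 2 * θ (Sum.inr ()) ^ 2 + σ ⟨0, hr⟩ ^ 2 * o ⟨0, hr⟩ ^ 2
        + 2 * σ ⟨0, hr⟩ ^ 4 * o ⟨0, hr⟩ ^ 2 * θ (Sum.inr ()) ^ 2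
            / (σ ⟨0, hr⟩ ^ 2 * θ (Sum.inr ()) ^ 2 + σ ⟨0, hr⟩ ^ 2 * o ⟨0, hr⟩ ^ 2)
        - 2 * σ ⟨0, hr⟩ ^ 3 * dc ⟨0, hr⟩ * o ⟨0, hr⟩ * θ (Sum.inr ())
            / (σ ⟨0, hr⟩ ^ 2 * θ (Sum.inr ()) ^ 2 + σ ⟨0, hr⟩ ^ 2 * o ⟨0, hr⟩ ^ 2))
      ≤ sharpness L θ ∧
    sharpness L θ ≤ (1 / (N : ℝ)) *
      (σ ⟨0, hr⟩ ^ 2 * θ (Sum.inr ()) ^ 2 + (∑ i, σ i ^ 2 * o i ^ 2)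
        + Real.sqrt (∑ i, (σ i * (σ i * o i * θ (Sum.inr ()) - dc i)) ^ 2)) :=
  two_layer_sharpness_bounds_arbitrary_theta_general N dd r hr X σ e w dc y hσpos hσdec he hw hX hy
    L hL θ o ho hpos
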